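/- There exists a function R: (0,π) × ℝ → ℝ, independent of ε, such that for every ε with 0 ≤ ε < 1 and every (θ,φ) with 0 < θ < π, φ ∈ ℝ, the function h_ε(θ,φ) = sin²θ · cos(2φ) · (1 - (3/196)·ε²·(6 - 7sin²θ)) satisfies Δ₁ h_ε = (-6 + (44/7)ε²)·h_ε + ε⁴·R(θ,φ). In other words, to first order in ε² the perturbed spherical harmonic with l = 2, m = 2 is an eigenfunction of Δ₁ with eigenvalue -6 + (44/7)ε²; in particular the first-order eigenvalue depends on m as well as on l. -/

import Mathlib

/-!
Both `h_ε` and the remainder separate as `F(sin²θ) · cos 2φ`. Since `∂²_φ cos 2φ = -4 cos 2φ`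
and `cos²θ = 1 - sin²θ`, applying `Δ₁` to `(b sin²θ + d sin⁴θ) cos 2φ` gives a polynomial
in `sin²θ` times `cos 2φ`, with `b = 1 - (18/196)ε²` and `d = (21/196)ε²`. The correction
`-(3/196)ε²(6 - 7 sin²θ)` is chosen so that its `ε²`-terms cancel those produced by the
`ε²`-part of `Δ₁` acting on `sin²θ cos 2φ`; what is left is `ε⁴` times an `ε`-free remainder.
-/

open Real

/-- The truncated (first order in `ε²`) Finslerian Laplace operator, acting on a function
`u : ℝ → ℝ → ℝ` of the angular variables `(θ, φ)`. -/
noncomputable def truncLaplacian (ε : ℝ) (u : ℝ → ℝ → ℝ) (θ φ : ℝ) : ℝ :=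
  ((4 - 5 * ε ^ 2 * sin θ ^ 2) / (4 * sin θ ^ 2)) * deriv (deriv (u θ)) φ
  + (1 - 3 / 4 * ε ^ 2 * sin θ ^ 2) * deriv (deriv (fun t => u t φ)) θ
  + (cos θ / sin θ) * (1 + 3 / 4 * ε ^ 2 * sin θ ^ 2) * deriv (fun t => u t φ) θ

theorem truncLaplacian_mul (ε : ℝ) (f g : ℝ → ℝ) (θ φ : ℝ) :
    truncLaplacian ε (fun θ' φ' => f θ' * g φ') θ φ =
      (4 - 5 * ε ^ 2 * sin θ ^ 2) / (4 * sin θ ^ 2) * f θ * deriv (deriv g) φ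
      + ((1 - 3 / 4 * ε ^ 2 * sin θ ^ 2) * deriv (deriv f) θ
        + cos θ / sin θ * (1 + 3 / 4 * ε ^ 2 * sin θ ^ 2) * deriv f θ) * g φ := by
  simp only [truncLaplacian, deriv_const_mul_field', deriv_mul_const_field']
  ring

theorem deriv_deriv_cos_two_mul :
    deriv (deriv fun φ : ℝ => cos (2 * φ)) = fun φ => -4 * cos (2 * φ) := by
  have hinner (φ : ℝ) : HasDerivAt (fun φ : ℝ => 2 * φ) 2 φ := by
    simpa using (hasDerivAt_id φ).const_mul 2
  have hfirst : deriv (fun φ : ℝ => cos (2 * φ)) = fun φ => -2 * sin (2 * φ) := by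
    funext φ
    exact ((hinner φ).cos.congr_deriv (by ring)).deriv
  funext φ
  rw [hfirst]
  exact (((hinner φ).sin.const_mul (-2)).congr_deriv (by ring)).deriv

section SinSqQuartic

variable (b d : ℝ)

theorem hasDerivAt_sin_sq_quartic (t : ℝ) :
    HasDerivAt (fun t => b * sin t ^ 2 + d * sin t ^ 4)
      ((2 * b + 4 * d * sin t ^ 2) * (sin t * cos t)) t := by
  have h := (((hasDerivAt_sin t).fun_pow 2).const_mul b).add
    (((hasDerivAt_sin t).fun_pow 4).const_mul d)
  exact h.congr_deriv (by push_cast; ring)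

theorem deriv_deriv_sin_sq_quartic (t : ℝ) :
    deriv (deriv fun t => b * sin t ^ 2 + d * sin t ^ 4) t =
      (2 * b + 4 * d * sin t ^ 2) * (cos t ^ 2 - sin t ^ 2) + 8 * d * sin t ^ 2 * cos t ^ 2 := by
  have hfirst : deriv (fun t => b * sin t ^ 2 + d * sin t ^ 4) =
      fun t => (2 * b + 4 * d * sin t ^ 2) * (sin t * cos t) :=
    funext fun t => (hasDerivAt_sin_sq_quartic b d t).deriv
  have hcoeff : HasDerivAt (fun t => 2 * b + 4 * d * sin t ^ 2) (8 * d * (sin t * cos t)) t :=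
    ((((hasDerivAt_sin t).fun_pow 2).const_mul (4 * d)).const_add (2 * b)).congr_deriv
      (by push_cast; ring)
  have hsincos : HasDerivAt (fun t => sin t * cos t) (cos t ^ 2 - sin t ^ 2) t :=
    ((hasDerivAt_sin t).mul (hasDerivAt_cos t)).congr_deriv (by ring)
  rw [hfirst, (hcoeff.fun_mul hsincos).deriv]
  ring

end SinSqQuartic

/-- To first order in `ε²`, the perturbed spherical harmonic with `l = 2`, `m = 2`,
`h_ε(θ,φ) = sin²θ · cos(2φ) · (1 - (3/196)·ε²·(6 - 7sin²θ))`, is an eigenfunction of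
`Δ₁` with eigenvalue `-6 + (44/7)ε²`: there is an `ε`-independent remainder `R(θ,φ)` with
`Δ₁ h_ε = (-6 + (44/7)ε²)·h_ε + ε⁴·R(θ,φ)`. -/
theorem truncLaplacian_l2m2_eigen :
    ∃ R : ℝ → ℝ → ℝ, ∀ ε : ℝ, 0 ≤ ε → ε < 1 →
      ∀ θ φ : ℝ, 0 < θ → θ < Real.pi →
        truncLaplacian ε
            (fun θ' φ' => Real.sin θ' ^ 2 * Real.cos (2 * φ') *
              (1 - 3 / 196 * ε ^ 2 * (6 - 7 * Real.sin θ' ^ 2)))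
            θ φ =
          (-6 + 44 / 7 * ε ^ 2) *
            (Real.sin θ ^ 2 * Real.cos (2 * φ) *
              (1 - 3 / 196 * ε ^ 2 * (6 - 7 * Real.sin θ ^ 2)))
          + ε ^ 4 * R θ φ := by
  refine ⟨fun θ φ => (81 / 686 * sin θ ^ 2 - 45 / 49 * sin θ ^ 4 + 27 / 28 * sin θ ^ 6)
      * cos (2 * φ), fun ε _ _ θ φ hθ0 hθπ => ?_⟩
  have hsin : sin θ ≠ 0 := (sin_pos_of_pos_of_lt_pi hθ0 hθπ).ne'
  have hseparated : (fun θ' φ' => sin θ' ^ 2 * cos (2 * φ') *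
        (1 - 3 / 196 * ε ^ 2 * (6 - 7 * sin θ' ^ 2))) =
      fun θ' φ' => ((1 - 18 / 196 * ε ^ 2) * sin θ' ^ 2 + 21 / 196 * ε ^ 2 * sin θ' ^ 4) *
        cos (2 * φ') := by
    funext θ' φ'
    ring
  rw [hseparated, truncLaplacian_mul, deriv_deriv_cos_two_mul, deriv_deriv_sin_sq_quartic,
    (hasDerivAt_sin_sq_quartic _ _ θ).deriv]
  field_simp
  simp only [cos_sq']
  ring
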